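/- arXiv:1912.10782 — 2 statements merged into one kernel-verified Lean document; each statement's English description precedes it below -/
import Mathlib

section
/- The augmentation category of the trivial n-strand bordered Legendrian is strictly isomorphic, as a DG category, to the Morse complex category: for any augmentations ε_1, ε_2, ε_3 of A_n(μ), the K-linear map h : hom₊(ε_1,ε_2) → End(C,F^•) defined by h(k_{ab}^∨) = (−1)^{s(a,b)} (e_b ⊗ e_a^*), where s(a,b) = μ(a)(μ(b)+1)+1, is a degree-preserving K-linear bijection onto the space of filtration-preserving endomorphisms of C, and it satisfies (i) h ∘ m_1 = D ∘ h, where D(f) = d(ε_2) ∘ f − (−1)^{|f|} f ∘ d(ε_1), and (ii) h(m_2(β ⊗ α)) = h(β) ∘ h(α) for all α ∈ hom₊(ε_1,ε_2) and β ∈ hom₊(ε_2,ε_3). Together with the bijection ε ↦ d(ε) on objects, h is a strict isomorphism of DG categories from Aug₊(I_n,μ;K) to the Morse complex category MC(I_n;K). -/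
/-!
Setup: `K` a field, `n ≥ 1`, `μ : Fin n → ℤ` a Maslov potential.  `C = ⊕ₐ K·eₐ` is the
graded vector space with `deg eₐ = -μ a` and decreasing filtration `Fⁱ C = span {eₐ : i ≤ a}`
(indices shifted to be `0`-based).  Linear maps `C → C` are encoded as matrices, where
`d b a` is the coefficient of `e b` in `d (e a)`.
-/

namespace AugSheaf

variable {K : Type*} [Field K] {n : ℕ}

/-- `d` is a Morse complex differential: homogeneous of degree `+1` (with respect to
`deg eₐ = -μ a`), filtration preserving, and `d ∘ d = 0`. -/
def IsMorse (μ : Fin n → ℤ) (d : Matrix (Fin n) (Fin n) K) : Prop :=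
  (∀ b a : Fin n, d b a ≠ 0 → μ b = μ a - 1) ∧
  (∀ b a : Fin n, d b a ≠ 0 → a ≤ b) ∧
  d * d = 0

/-- An augmentation of the border DGA `A_n(μ)`, encoded by its values `ε a b = ε (k_{ab})`
on the generators (`a < b`): it vanishes outside `a < b`, is supported in degree `0`
(i.e. `ε a b ≠ 0` forces `μ a = μ b + 1`), and satisfies `ε ∘ ∂ = 0` on the generators. -/
def IsBorderAug (μ : Fin n → ℤ) (ε : Fin n → Fin n → K) : Prop :=
  (∀ a b : Fin n, ¬ a < b → ε a b = 0) ∧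
  (∀ a b : Fin n, ε a b ≠ 0 → μ a = μ b + 1) ∧
  (∀ a b : Fin n, a < b →
    ∑ c ∈ Finset.Ioo a b, (-1 : K) ^ (μ a - μ c) * ε a c * ε c b = 0)

/-- The linear map `d(ε) : C → C`, `d(ε) eₐ = ∑_{b>a} (-1)^(μ a) ε (k_{ab}) e_b`,
associated to an augmentation `ε`. -/
def augDiff (μ : Fin n → ℤ) (ε : Fin n → Fin n → K) : Matrix (Fin n) (Fin n) K :=
  fun b a => if a < b then (-1 : K) ^ (μ a) * ε a b else 0

/-- The hom space `hom₊(ε₁,ε₂) = ⊕_{a ≤ b} K·k_{ab}^∨` (with `k_{aa} := y_a` and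
`|k_{ab}^∨| = μ a - μ b`) is encoded by its coefficient functions `x`, with
`x a b` the coefficient of `k_{ab}^∨`; elements are supported on pairs `a ≤ b`.
`m1` is the differential of the augmentation category, determined on generators by
`m₁ k_{ab}^∨ = -∑_{c<a} ε₁ c a • k_{cb}^∨ + (-1)^(μ a - μ b) ∑_{b<d} ε₂ b d • k_{ad}^∨`. -/
def m1 (μ : Fin n → ℤ) (ε₁ ε₂ x : Fin n → Fin n → K) : Fin n → Fin n → K :=
  fun p q =>
    -(∑ a ∈ Finset.Ioi p, ε₁ p a * x a q) +
      ∑ b ∈ Finset.Iio q, (-1 : K) ^ (μ p - μ b) * ε₂ b q * x p b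

/-- The composition `m₂ : hom₊(ε₂,ε₃) ⊗ hom₊(ε₁,ε₂) → hom₊(ε₁,ε₃)`, determined on
generators by `m₂ (k_{cd}^∨ ⊗ k_{ab}^∨) = δ_{bc} (-1)^(|k_{ab}^∨||k_{cd}^∨| + 1) k_{ad}^∨`. -/
def m2 (μ : Fin n → ℤ) (y x : Fin n → Fin n → K) : Fin n → Fin n → K :=
  fun p q => ∑ c : Fin n, (-1 : K) ^ ((μ p - μ c) * (μ c - μ q) + 1) * y c q * x p c

/-- The functor `h`, determined on generators by
`h (k_{ab}^∨) = (-1)^(s a b) (e_b ⊗ eₐ^*)` with `s a b = μ a (μ b + 1) + 1`. -/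
def hFunctor (μ : Fin n → ℤ) (x : Fin n → Fin n → K) : Matrix (Fin n) (Fin n) K :=
  fun b a => (-1 : K) ^ (μ a * (μ b + 1) + 1) * x a b

end AugSheaf

/-!
`augDiff` and `hFunctor` only transpose coefficients and multiply them by signs, so they are
bijections, and `ε ∘ ∂ = 0` is `d(ε)² = 0` read off coefficientwise. Every coefficient of both sides
of (i) and (ii) is a sum over an intermediate index `c` of the same products of coefficients; the
signs agree term by term because augmentations live in degree `0` and `x` is homogeneous, so the
two sign exponents of a nonzero term differ by an even integer.
-/

section Sign

variable {R : Type*} [DivisionRing R]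

lemma neg_one_zpow_eq_of_even_sub {a b : ℤ} (h : Even (a - b)) : (-1 : R) ^ a = (-1 : R) ^ b := by
  rw [← Int.cast_negOnePow, ← Int.cast_negOnePow, (Int.negOnePow_eq_iff a b).2 h]

lemma neg_one_zpow_add (a b : ℤ) : (-1 : R) ^ (a + b) = (-1 : R) ^ a * (-1 : R) ^ b :=
  zpow_add₀ (neg_ne_zero.2 one_ne_zero) a b

lemma neg_one_zpow_mul_self (a : ℤ) : (-1 : R) ^ a * (-1 : R) ^ a = 1 := by
  rw [← neg_one_zpow_add]
  exact Even.neg_one_zpow ⟨a, rfl⟩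

end Sign

namespace Matrix

variable {ι R : Type*} [Fintype ι] [LinearOrder ι] [NonUnitalNonAssocSemiring R]

lemma mul_apply_eq_sum_Iio [LocallyFiniteOrderBot ι] {d M : Matrix ι ι R}
    (hd : ∀ b c, d b c ≠ 0 → c < b) (b a : ι) : (d * M) b a = ∑ c ∈ Finset.Iio b, d b c * M c a :=
  (Fintype.sum_subset fun c hc => Finset.mem_Iio.2 (hd b c (left_ne_zero_of_mul hc))).symm

lemma mul_apply_eq_sum_Ioi [LocallyFiniteOrderTop ι] {M d : Matrix ι ι R}
    (hd : ∀ c a, d c a ≠ 0 → a < c) (b a : ι) : (M * d) b a = ∑ c ∈ Finset.Ioi a, M b c * d c a :=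
  (Fintype.sum_subset fun c hc => Finset.mem_Ioi.2 (hd c a (right_ne_zero_of_mul hc))).symm

lemma mul_apply_eq_sum_Ioo [LocallyFiniteOrder ι] {d d' : Matrix ι ι R}
    (hd : ∀ b c, d b c ≠ 0 → c < b) (hd' : ∀ c a, d' c a ≠ 0 → a < c) (b a : ι) :
    (d * d') b a = ∑ c ∈ Finset.Ioo a b, d b c * d' c a :=
  (Fintype.sum_subset fun c hc => Finset.mem_Ioo.2
    ⟨hd' c a (right_ne_zero_of_mul hc), hd b c (left_ne_zero_of_mul hc)⟩).symm

end Matrix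

namespace AugSheaf

variable {K : Type*} [Field K] {n : ℕ}

lemma augDiff_of_lt (μ : Fin n → ℤ) (ε : Fin n → Fin n → K) {a b : Fin n} (h : a < b) :
    augDiff μ ε b a = (-1 : K) ^ μ a * ε a b :=
  if_pos h

lemma lt_of_augDiff_ne_zero {μ : Fin n → ℤ} {ε : Fin n → Fin n → K} {b a : Fin n}
    (h : augDiff μ ε b a ≠ 0) : a < b := by
  by_contra hab
  exact h (if_neg hab)

lemma IsMorse.lt_of_ne_zero {μ : Fin n → ℤ} {d : Matrix (Fin n) (Fin n) K} (hd : IsMorse μ d)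
    {b a : Fin n} (h : d b a ≠ 0) : a < b := by
  refine lt_of_le_of_ne (hd.2.1 b a h) fun hab => ?_
  have := hd.1 b a h
  rw [hab] at this
  omega

lemma IsBorderAug.isMorse_augDiff {μ : Fin n → ℤ} {ε : Fin n → Fin n → K}
    (hε : IsBorderAug μ ε) : IsMorse μ (augDiff μ ε) := by
  refine ⟨fun b a h => ?_, fun _ _ h => (lt_of_augDiff_ne_zero h).le, ?_⟩
  · have hab := lt_of_augDiff_ne_zero h
    rw [augDiff_of_lt μ ε hab] at h
    have := hε.2.1 a b (right_ne_zero_of_mul h)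
    omega
  ext b a
  rw [Matrix.mul_apply_eq_sum_Ioo (fun _ _ => lt_of_augDiff_ne_zero)
    (fun _ _ => lt_of_augDiff_ne_zero), Matrix.zero_apply]
  by_cases hab : a < b
  · rw [← hε.2.2 a b hab]
    refine Finset.sum_congr rfl fun c hc => ?_
    obtain ⟨hac, hcb⟩ := Finset.mem_Ioo.1 hc
    rw [augDiff_of_lt μ ε hcb, augDiff_of_lt μ ε hac]
    have hs : (-1 : K) ^ μ c * (-1 : K) ^ μ a = (-1 : K) ^ (μ a - μ c) := by
      rw [← neg_one_zpow_add]
      exact neg_one_zpow_eq_of_even_sub ⟨μ c, by ring⟩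
    linear_combination (ε c b * ε a c) * hs
  · rw [Finset.Ioo_eq_empty hab, Finset.sum_empty]

def augOfDiff (μ : Fin n → ℤ) (d : Matrix (Fin n) (Fin n) K) : Fin n → Fin n → K :=
  fun a b => if a < b then (-1 : K) ^ μ a * d b a else 0

lemma IsMorse.isBorderAug_augOfDiff {μ : Fin n → ℤ} {d : Matrix (Fin n) (Fin n) K}
    (hd : IsMorse μ d) : IsBorderAug μ (augOfDiff μ d) := by
  refine ⟨fun a b hab => if_neg hab, fun a b h => ?_, fun a b hab => ?_⟩
  · have hab : a < b := by
      by_contra hab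
      exact h (if_neg hab)
    rw [augOfDiff, if_pos hab] at h
    have := hd.1 b a (right_ne_zero_of_mul h)
    omega
  · rw [← Matrix.zero_apply (α := K) b a, ← hd.2.2,
      Matrix.mul_apply_eq_sum_Ioo (fun _ _ => hd.lt_of_ne_zero) (fun _ _ => hd.lt_of_ne_zero)]
    refine Finset.sum_congr rfl fun c hc => ?_
    obtain ⟨hac, hcb⟩ := Finset.mem_Ioo.1 hc
    rw [augOfDiff, augOfDiff, if_pos hac, if_pos hcb]
    have hs : (-1 : K) ^ (μ a - μ c) * (-1 : K) ^ μ a * (-1 : K) ^ μ c = 1 := by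
      rw [← neg_one_zpow_add, ← neg_one_zpow_add]
      exact Even.neg_one_zpow ⟨μ a, by ring⟩
    linear_combination (d c a * d b c) * hs

lemma augOfDiff_augDiff (μ : Fin n → ℤ) {ε : Fin n → Fin n → K}
    (hε : ∀ a b : Fin n, ¬ a < b → ε a b = 0) : augOfDiff μ (augDiff μ ε) = ε := by
  funext a b
  by_cases hab : a < b
  · rw [augOfDiff, if_pos hab, augDiff_of_lt μ ε hab, ← mul_assoc, neg_one_zpow_mul_self,
      one_mul]
  · rw [augOfDiff, if_neg hab, hε a b hab]

lemma IsMorse.augDiff_augOfDiff {μ : Fin n → ℤ} {d : Matrix (Fin n) (Fin n) K}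
    (hd : IsMorse μ d) : augDiff μ (augOfDiff μ d) = d := by
  funext b a
  by_cases hab : a < b
  · rw [augDiff_of_lt μ _ hab, augOfDiff, if_pos hab, ← mul_assoc, neg_one_zpow_mul_self,
      one_mul]
  · rw [augDiff, if_neg hab]
    by_contra h
    exact hab (hd.lt_of_ne_zero (Ne.symm h))

theorem bijOn_augDiff (μ : Fin n → ℤ) :
    Set.BijOn (augDiff (K := K) μ) {ε | IsBorderAug μ ε} {d | IsMorse μ d} :=
  Set.InvOn.bijOn ⟨fun _ hε => augOfDiff_augDiff μ hε.1, fun _ hd => hd.augDiff_augOfDiff⟩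
    (fun _ hε => hε.isMorse_augDiff) (fun _ hd => hd.isBorderAug_augOfDiff)

def hFunctorEquiv (μ : Fin n → ℤ) : (Fin n → Fin n → K) ≃ₗ[K] Matrix (Fin n) (Fin n) K where
  toFun := hFunctor μ
  invFun f a b := (-1 : K) ^ (μ a * (μ b + 1) + 1) * f b a
  map_add' x y := by
    funext b a
    simp only [hFunctor, Pi.add_apply, Matrix.add_apply, mul_add]
  map_smul' c x := by
    funext b a
    simp only [hFunctor, Pi.smul_apply, Matrix.smul_apply, smul_eq_mul, RingHom.id_apply]
    ring
  left_inv x := by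
    funext a b
    simp only [hFunctor, ← mul_assoc, neg_one_zpow_mul_self, one_mul]
  right_inv f := by
    funext b a
    simp only [hFunctor, ← mul_assoc, neg_one_zpow_mul_self, one_mul]

lemma hFunctor_apply_ne_zero_iff {μ : Fin n → ℤ} {x : Fin n → Fin n → K} {b a : Fin n} :
    hFunctor μ x b a ≠ 0 ↔ x a b ≠ 0 := by
  rw [hFunctor, mul_ne_zero_iff, and_iff_right (zpow_ne_zero _ (neg_ne_zero.2 one_ne_zero))]

theorem bijOn_hFunctor (μ : Fin n → ℤ) :
    Set.BijOn (hFunctor (K := K) μ) {x | ∀ a b : Fin n, ¬ a ≤ b → x a b = 0}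
      {f | ∀ b a : Fin n, f b a ≠ 0 → a ≤ b} :=
  (hFunctorEquiv μ).toEquiv.bijOn fun _ =>
    ⟨fun h a b => not_imp_comm.1 (h b a ∘ hFunctor_apply_ne_zero_iff.2),
      fun h b a hne => not_imp_comm.1 (h a b) (hFunctor_apply_ne_zero_iff.1 hne)⟩

theorem hFunctor_m1 {μ : Fin n → ℤ} {ε₁ ε₂ x : Fin n → Fin n → K} {k : ℤ}
    (hε₁ : ∀ a b, ε₁ a b ≠ 0 → μ a = μ b + 1) (hε₂ : ∀ a b, ε₂ a b ≠ 0 → μ a = μ b + 1)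
    (hx : ∀ a b, x a b ≠ 0 → μ a - μ b = k) :
    hFunctor μ (m1 μ ε₁ ε₂ x) =
      augDiff μ ε₂ * hFunctor μ x - ((-1 : K) ^ k) • (hFunctor μ x * augDiff μ ε₁) := by
  ext b a
  rw [Matrix.sub_apply, Matrix.smul_apply, smul_eq_mul,
    Matrix.mul_apply_eq_sum_Iio (fun _ _ => lt_of_augDiff_ne_zero),
    Matrix.mul_apply_eq_sum_Ioi (fun _ _ => lt_of_augDiff_ne_zero), hFunctor, m1, mul_add,
    mul_neg, neg_add_eq_sub, Finset.mul_sum, Finset.mul_sum, Finset.mul_sum]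
  congr 1
  · refine Finset.sum_congr rfl fun c hc => ?_
    rw [augDiff_of_lt μ ε₂ (Finset.mem_Iio.1 hc), hFunctor]
    by_cases h : ε₂ c b = 0
    · simp [h]
    have hcb := hε₂ c b h
    have hs : (-1 : K) ^ (μ a * (μ b + 1) + 1) * (-1 : K) ^ (μ a - μ c) =
        (-1 : K) ^ μ c * (-1 : K) ^ (μ a * (μ c + 1) + 1) := by
      rw [← neg_one_zpow_add, ← neg_one_zpow_add]
      exact neg_one_zpow_eq_of_even_sub ⟨-μ c, by rw [hcb]; ring⟩
    linear_combination (ε₂ c b * x a c) * hs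
  · refine Finset.sum_congr rfl fun c hc => ?_
    rw [augDiff_of_lt μ ε₁ (Finset.mem_Ioi.1 hc), hFunctor]
    by_cases h : ε₁ a c * x c b = 0
    · rcases mul_eq_zero.1 h with h | h <;> simp [h]
    have hac := hε₁ a c (left_ne_zero_of_mul h)
    have hcb := hx c b (right_ne_zero_of_mul h)
    have hs : (-1 : K) ^ (μ a * (μ b + 1) + 1) =
        (-1 : K) ^ k * ((-1 : K) ^ (μ c * (μ b + 1) + 1) * (-1 : K) ^ μ a) := by
      rw [← neg_one_zpow_add, ← neg_one_zpow_add]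
      exact neg_one_zpow_eq_of_even_sub ⟨μ b - μ c, by rw [← hcb, hac]; ring⟩
    linear_combination (ε₁ a c * x c b) * hs

theorem hFunctor_m2 (μ : Fin n → ℤ) (y x : Fin n → Fin n → K) :
    hFunctor μ (m2 μ y x) = hFunctor μ y * hFunctor μ x := by
  ext b a
  rw [Matrix.mul_apply, hFunctor, m2, Finset.mul_sum]
  refine Finset.sum_congr rfl fun c _ => ?_
  rw [hFunctor, hFunctor]
  have hs : (-1 : K) ^ (μ a * (μ b + 1) + 1) * (-1 : K) ^ ((μ a - μ c) * (μ c - μ b) + 1) =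
      (-1 : K) ^ (μ c * (μ b + 1) + 1) * (-1 : K) ^ (μ a * (μ c + 1) + 1) := by
    rw [← neg_one_zpow_add, ← neg_one_zpow_add]
    refine neg_one_zpow_eq_of_even_sub ?_
    have hexp : μ a * (μ b + 1) + 1 + ((μ a - μ c) * (μ c - μ b) + 1) -
        (μ c * (μ b + 1) + 1 + (μ a * (μ c + 1) + 1)) = -(μ c * (μ c + 1)) := by ring
    rw [hexp]
    exact (Int.even_mul_succ_self (μ c)).neg
  linear_combination (y c b * x a c) * hs

theorem aug_cat_iso_morse_cat_general (μ : Fin n → ℤ)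
    (ε₁ ε₂ : Fin n → Fin n → K)
    (h₁ : IsBorderAug μ ε₁) (h₂ : IsBorderAug μ ε₂) :
    -- the bijection `ε ↦ d(ε)` on objects
    Set.BijOn (augDiff (K := K) μ) {ε | IsBorderAug μ ε} {d | IsMorse μ d} ∧
    -- `h` is a bijection from `hom₊` onto the filtration-preserving endomorphisms
    Set.BijOn (hFunctor (K := K) μ) {x | ∀ a b : Fin n, ¬ a ≤ b → x a b = 0}
      {f | ∀ b a : Fin n, f b a ≠ 0 → a ≤ b} ∧
    -- `h` is `K`-linear
    (∀ x y : Fin n → Fin n → K, hFunctor μ (x + y) = hFunctor μ x + hFunctor μ y) ∧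
    (∀ (c : K) (x : Fin n → Fin n → K), hFunctor μ (c • x) = c • hFunctor μ x) ∧
    -- `h` is degree preserving
    (∀ (k : ℤ) (x : Fin n → Fin n → K), (∀ a b : Fin n, x a b ≠ 0 → μ a - μ b = k) →
      ∀ b a : Fin n, hFunctor μ x b a ≠ 0 → μ a - μ b = k) ∧
    -- (i)  `h ∘ m₁ = D ∘ h` on homogeneous elements
    (∀ (k : ℤ) (x : Fin n → Fin n → K), (∀ a b : Fin n, ¬ a ≤ b → x a b = 0) →
      (∀ a b : Fin n, x a b ≠ 0 → μ a - μ b = k) →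
      hFunctor μ (m1 μ ε₁ ε₂ x) =
        augDiff μ ε₂ * hFunctor μ x - ((-1 : K) ^ k) • (hFunctor μ x * augDiff μ ε₁)) ∧
    -- (ii) `h (m₂ (β ⊗ α)) = h β ∘ h α`
    (∀ x y : Fin n → Fin n → K, (∀ a b : Fin n, ¬ a ≤ b → x a b = 0) →
      (∀ a b : Fin n, ¬ a ≤ b → y a b = 0) →
      hFunctor μ (m2 μ y x) = hFunctor μ y * hFunctor μ x) :=
  ⟨bijOn_augDiff μ, bijOn_hFunctor μ, (hFunctorEquiv μ).map_add, (hFunctorEquiv μ).map_smul,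
    fun _ _ hx b a hne => hx a b (hFunctor_apply_ne_zero_iff.1 hne),
    fun _ _ _ hx => hFunctor_m1 h₁.2.1 h₂.2.1 hx, fun x y _ _ => hFunctor_m2 μ y x⟩

/-- **`Aug₊(I_n,μ;K)` is strictly isomorphic to the Morse complex DG category**:
`h` is a degree-preserving `K`-linear bijection from `hom₊(ε₁,ε₂)` onto the space
`End(C,F)` of filtration-preserving endomorphisms of `C`, it intertwines `m₁` with the
Morse complex differential `D f = d(ε₂) ∘ f - (-1)^{|f|} f ∘ d(ε₁)` and `m₂` with
composition of endomorphisms; together with the bijection `ε ↦ d(ε)` on objects,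
it is a strict isomorphism of DG categories. -/
theorem aug_cat_iso_morse_cat (hn : 1 ≤ n) (μ : Fin n → ℤ)
    (ε₁ ε₂ ε₃ : Fin n → Fin n → K)
    (h₁ : IsBorderAug μ ε₁) (h₂ : IsBorderAug μ ε₂) (h₃ : IsBorderAug μ ε₃) :
    -- the bijection `ε ↦ d(ε)` on objects
    Set.BijOn (augDiff (K := K) μ) {ε | IsBorderAug μ ε} {d | IsMorse μ d} ∧
    -- `h` is a bijection from `hom₊` onto the filtration-preserving endomorphisms
    Set.BijOn (hFunctor (K := K) μ) {x | ∀ a b : Fin n, ¬ a ≤ b → x a b = 0}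
      {f | ∀ b a : Fin n, f b a ≠ 0 → a ≤ b} ∧
    -- `h` is `K`-linear
    (∀ x y : Fin n → Fin n → K, hFunctor μ (x + y) = hFunctor μ x + hFunctor μ y) ∧
    (∀ (c : K) (x : Fin n → Fin n → K), hFunctor μ (c • x) = c • hFunctor μ x) ∧
    -- `h` is degree preserving
    (∀ (k : ℤ) (x : Fin n → Fin n → K), (∀ a b : Fin n, x a b ≠ 0 → μ a - μ b = k) →
      ∀ b a : Fin n, hFunctor μ x b a ≠ 0 → μ a - μ b = k) ∧
    -- (i)  `h ∘ m₁ = D ∘ h` on homogeneous elements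
    (∀ (k : ℤ) (x : Fin n → Fin n → K), (∀ a b : Fin n, ¬ a ≤ b → x a b = 0) →
      (∀ a b : Fin n, x a b ≠ 0 → μ a - μ b = k) →
      hFunctor μ (m1 μ ε₁ ε₂ x) =
        augDiff μ ε₂ * hFunctor μ x - ((-1 : K) ^ k) • (hFunctor μ x * augDiff μ ε₁)) ∧
    -- (ii) `h (m₂ (β ⊗ α)) = h β ∘ h α`
    (∀ x y : Fin n → Fin n → K, (∀ a b : Fin n, ¬ a ≤ b → x a b = 0) →
      (∀ a b : Fin n, ¬ a ≤ b → y a b = 0) →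
      hFunctor μ (m2 μ y x) = hFunctor μ y * hFunctor μ x) :=
  aug_cat_iso_morse_cat_general μ ε₁ ε₂ h₁ h₂

end AugSheaf
end

section
/- The augmentation category of the border DGA A_n(μ) is a DG category: for any augmentations ε_1, ε_2, ε_3, ε_4 of A_n(μ), the explicitly defined operations m_1 and m_2 satisfy (i) m_1 ∘ m_1 = 0 on hom₊(ε_1,ε_2); (ii) the graded Leibniz rule m_1(m_2(β ⊗ α)) = m_2(m_1(β) ⊗ α) + (−1)^{|β|} m_2(β ⊗ m_1(α)) for all homogeneous β ∈ hom₊(ε_2,ε_3) and α ∈ hom₊(ε_1,ε_2); and (iii) strict associativity m_2(γ ⊗ m_2(β ⊗ α)) = m_2(m_2(γ ⊗ β) ⊗ α) for all γ ∈ hom₊(ε_3,ε_4), β ∈ hom₊(ε_2,ε_3), α ∈ hom₊(ε_1,ε_2). -/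
/-!
Setup: `K` a field, `n ≥ 1`, `μ : Fin n → ℤ` a Maslov potential.  `C = ⊕ₐ K·eₐ` is the
graded vector space with `deg eₐ = -μ a` and decreasing filtration `Fⁱ C = span {eₐ : i ≤ a}`
(indices shifted to be `0`-based).  Linear maps `C → C` are encoded as matrices, where
`d b a` is the coefficient of `e b` in `d (e a)`.
-/

namespace AugSheaf

variable {K : Type*} [Field K] {n : ℕ}

/-!
Write elements of `hom₊` and augmentations as `n × n` matrices and let `Δ` be the diagonal
matrix of the signs `(-1)^(μ a)`. Then `m₁ x = -ε₁ x + Δ x Δ ε₂`, and after the Koszul twist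
`τ` (an involution), `m₂ (y ⊗ x) = -τ (τx · Δ · τy)`. The degree condition on an augmentation
makes `ε` anticommute with `Δ`, and `ε ∘ ∂ = 0` says `ε² = 0`; together they give `m₁² = 0`.
Associativity of `m₂` is associativity of matrix multiplication, and the Leibniz rule becomes,
after applying `τ`, an identity of noncommutative polynomials once a homogeneous `β` of
degree `k` is moved past `Δ` by `(-1)^k Δ β = β Δ`.
-/

open Matrix

theorem neg_one_zpow_eq_of_even_sub {a b : ℤ} (h : Even (a - b)) :
    (-1 : K) ^ a = (-1 : K) ^ b := by
  rw [show a = (a - b) + b by ring, zpow_add₀ (by norm_num), h.neg_one_zpow, one_mul]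

theorem neg_one_zpow_mul_self (e : ℤ) : (-1 : K) ^ e * (-1 : K) ^ e = 1 := by
  rw [← zpow_add₀ (by norm_num)]
  exact Even.neg_one_zpow ⟨e, rfl⟩

theorem neg_one_zpow_sub (a b : ℤ) : (-1 : K) ^ (a - b) = (-1 : K) ^ a * (-1 : K) ^ b := by
  rw [← zpow_add₀ (by norm_num)]
  exact neg_one_zpow_eq_of_even_sub ⟨-b, by ring⟩

section Signs

variable (μ : Fin n → ℤ)

def gradingSign : Matrix (Fin n) (Fin n) K :=
  diagonal fun a => (-1 : K) ^ μ a

/-- Modulo 2 the Koszul sign of `m₂` is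
`(μ p - μ c)(μ c - μ q) ≡ μ p μ q + μ p μ c + μ c + μ c μ q`; this twist absorbs the terms
involving two indices, leaving a matrix product (`of_m2`). -/
def koszulTwist : Matrix (Fin n) (Fin n) K →ₗ[K] Matrix (Fin n) (Fin n) K where
  toFun w := of fun p q => (-1 : K) ^ (μ p * μ q) * w p q
  map_add' v w := by ext; simp [mul_add]
  map_smul' c w := by ext; simp [mul_left_comm]

@[simp]
theorem koszulTwist_apply (w : Matrix (Fin n) (Fin n) K) (p q : Fin n) :
    koszulTwist μ w p q = (-1 : K) ^ (μ p * μ q) * w p q :=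
  rfl

@[simp]
theorem koszulTwist_koszulTwist (w : Matrix (Fin n) (Fin n) K) :
    koszulTwist μ (koszulTwist μ w) = w := by
  ext; simp [← mul_assoc, neg_one_zpow_mul_self]

theorem koszulTwist_injective : Function.Injective (koszulTwist (K := K) μ) :=
  Function.LeftInverse.injective (koszulTwist_koszulTwist μ)

theorem koszulTwist_diagonal_mul (d : Fin n → K) (w : Matrix (Fin n) (Fin n) K) :
    koszulTwist μ (diagonal d * w) = diagonal d * koszulTwist μ w := by
  ext; simp [diagonal_mul, mul_left_comm]

theorem koszulTwist_mul_diagonal (d : Fin n → K) (w : Matrix (Fin n) (Fin n) K) :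
    koszulTwist μ (w * diagonal d) = koszulTwist μ w * diagonal d := by
  ext; simp [mul_diagonal, mul_assoc]

end Signs

section OddMatrix

variable {μ : Fin n → ℤ} {ε : Fin n → Fin n → K}

theorem neg_one_zpow_of_degree_eq {a b : Fin n} (hab : μ a = μ b + 1) :
    (-1 : K) ^ μ a = -(-1 : K) ^ μ b := by
  rw [hab, zpow_add_one₀ (by norm_num), mul_neg_one]

theorem gradingSign_mul_add_mul_gradingSign (hdeg : ∀ a b, ε a b ≠ 0 → μ a = μ b + 1) :
    gradingSign μ * of ε + of ε * gradingSign μ = 0 := by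
  ext a b
  simp only [Matrix.add_apply, gradingSign, diagonal_mul, mul_diagonal, of_apply,
    Matrix.zero_apply]
  by_cases h : ε a b = 0
  · simp [h]
  · rw [neg_one_zpow_of_degree_eq (hdeg a b h)]
    ring

theorem koszulTwist_mul_left (hdeg : ∀ a b, ε a b ≠ 0 → μ a = μ b + 1)
    (w : Matrix (Fin n) (Fin n) K) :
    koszulTwist μ (of ε * w) = of ε * koszulTwist μ w * gradingSign μ := by
  ext p q
  simp only [gradingSign, mul_diagonal]
  simp only [koszulTwist_apply, mul_apply, of_apply, Finset.mul_sum, Finset.sum_mul]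
  refine Finset.sum_congr rfl fun a _ => ?_
  by_cases h : ε p a = 0
  · simp [h]
  · rw [hdeg p a h, add_mul, one_mul, zpow_add₀ (by norm_num)]
    ring

theorem koszulTwist_mul_right (hdeg : ∀ a b, ε a b ≠ 0 → μ a = μ b + 1)
    (w : Matrix (Fin n) (Fin n) K) :
    koszulTwist μ (w * of ε) = gradingSign μ * koszulTwist μ w * of ε := by
  ext p q
  rw [Matrix.mul_assoc]
  simp only [gradingSign, diagonal_mul]
  simp only [koszulTwist_apply, mul_apply, of_apply, Finset.mul_sum]
  refine Finset.sum_congr rfl fun b _ => ?_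
  by_cases h : ε b q = 0
  · simp [h]
  · have hsign : (-1 : K) ^ (μ p * μ q) = (-1 : K) ^ μ p * (-1 : K) ^ (μ p * μ b) := by
      rw [← zpow_add₀ (by norm_num)]
      exact neg_one_zpow_eq_of_even_sub ⟨-μ p, by rw [hdeg b q h]; ring⟩
    rw [hsign]
    ring

end OddMatrix

theorem IsBorderAug.mul_self_eq_zero {μ : Fin n → ℤ} {ε : Fin n → Fin n → K}
    (h : IsBorderAug μ ε) : of ε * of ε = 0 := by
  obtain ⟨hvan, hdeg, hrel⟩ := h
  ext a b
  have hIoo : ∑ c, ε a c * ε c b = ∑ c ∈ Finset.Ioo a b, ε a c * ε c b := by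
    refine (Finset.sum_subset (Finset.subset_univ _) fun c _ hc => ?_).symm
    rw [Finset.mem_Ioo, not_and_or] at hc
    rcases hc with hc | hc
    · rw [hvan a c hc, zero_mul]
    · rw [hvan c b hc, mul_zero]
  have hsign : ∀ c, ε a c * ε c b = -((-1 : K) ^ (μ a - μ c) * ε a c * ε c b) := by
    intro c
    by_cases h : ε a c = 0
    · simp [h]
    · rw [show μ a - μ c = 1 by rw [hdeg a c h]; ring]
      ring
  simp only [Matrix.zero_apply, mul_apply, of_apply]
  rw [hIoo]
  simp only [hsign, Finset.sum_neg_distrib, neg_eq_zero]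
  by_cases hab : a < b
  · exact hrel a b hab
  · rw [Finset.Ioo_eq_empty hab, Finset.sum_empty]

structure IsStrictUpperDegreeOne (μ : Fin n → ℤ) (ε : Fin n → Fin n → K) : Prop where
  eq_zero_of_not_lt : ∀ a b, ¬ a < b → ε a b = 0
  degree_eq : ∀ a b, ε a b ≠ 0 → μ a = μ b + 1

theorem IsBorderAug.isStrictUpperDegreeOne {μ : Fin n → ℤ} {ε : Fin n → Fin n → K}
    (h : IsBorderAug μ ε) : IsStrictUpperDegreeOne μ ε :=
  ⟨h.1, h.2.1⟩

section Operations

variable {μ : Fin n → ℤ} {ε₁ ε₂ : Fin n → Fin n → K}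

theorem of_m1 (h₁ : ∀ a b, ¬ a < b → ε₁ a b = 0) (h₂ : ∀ a b, ¬ a < b → ε₂ a b = 0)
    (x : Fin n → Fin n → K) :
    of (m1 μ ε₁ ε₂ x) = -(of ε₁ * of x) + gradingSign μ * of x * gradingSign μ * of ε₂ := by
  ext p q
  have hleft : ∑ a ∈ Finset.Ioi p, ε₁ p a * x a q = ∑ a, ε₁ p a * x a q :=
    Finset.sum_subset (Finset.subset_univ _) fun a _ ha => by
      rw [h₁ p a (by simpa using ha), zero_mul]
  have hright : ∑ b ∈ Finset.Iio q, (-1 : K) ^ (μ p - μ b) * ε₂ b q * x p b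
      = ∑ b, (-1 : K) ^ μ p * x p b * (-1 : K) ^ μ b * ε₂ b q := by
    rw [Finset.sum_subset (Finset.subset_univ _) fun b _ hb => by
      rw [h₂ b q (by simpa using hb), mul_zero, zero_mul]]
    refine Finset.sum_congr rfl fun b _ => ?_
    rw [neg_one_zpow_sub]
    ring
  rw [Matrix.add_apply, Matrix.neg_apply, mul_apply, mul_apply]
  simp only [m1, of_apply, hleft, hright, gradingSign, mul_diagonal, diagonal_mul]

theorem of_m2 (y x : Fin n → Fin n → K) :
    of (m2 μ y x) =
      -koszulTwist μ (koszulTwist μ (of x) * gradingSign μ * koszulTwist μ (of y)) := by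
  ext p q
  rw [Matrix.neg_apply, koszulTwist_apply, mul_apply]
  simp only [m2, of_apply, gradingSign, mul_diagonal, koszulTwist_apply, Finset.mul_sum,
    ← Finset.sum_neg_distrib]
  refine Finset.sum_congr rfl fun c _ => ?_
  have hparity : Even ((μ p - μ c) * (μ c - μ q) + 1 -
      (1 + μ p * μ q + μ p * μ c + μ c + μ c * μ q)) := by
    rw [show (μ p - μ c) * (μ c - μ q) + 1 - (1 + μ p * μ q + μ p * μ c + μ c + μ c * μ q)
        = 2 * -(μ p * μ q) - μ c * (μ c + 1) by ring]
    exact (even_two_mul _).sub (Int.even_mul_succ_self _)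
  rw [neg_one_zpow_eq_of_even_sub hparity]
  simp only [zpow_add₀ (show (-1 : K) ≠ 0 by norm_num), zpow_one]
  ring

theorem koszulTwist_of_m1 (h₁ : IsStrictUpperDegreeOne μ ε₁) (h₂ : IsStrictUpperDegreeOne μ ε₂)
    (x : Fin n → Fin n → K) :
    koszulTwist μ (of (m1 μ ε₁ ε₂ x)) =
      -(of ε₁ * koszulTwist μ (of x) * gradingSign μ) +
        koszulTwist μ (of x) * gradingSign μ * of ε₂ := by
  rw [of_m1 h₁.eq_zero_of_not_lt h₂.eq_zero_of_not_lt, map_add, map_neg,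
    koszulTwist_mul_left h₁.degree_eq, koszulTwist_mul_right h₂.degree_eq]
  simp only [gradingSign, koszulTwist_mul_diagonal, koszulTwist_diagonal_mul, ← Matrix.mul_assoc,
    diagonal_mul_diagonal, neg_one_zpow_mul_self, diagonal_one, Matrix.one_mul]

theorem smul_gradingSign_mul_of_homogeneous {k : ℤ} {y : Matrix (Fin n) (Fin n) K}
    (hy : ∀ a b, y a b ≠ 0 → μ a - μ b = k) :
    (-1 : K) ^ k • (gradingSign μ * y) = y * gradingSign μ := by
  ext a b
  simp only [Matrix.smul_apply, gradingSign, diagonal_mul, mul_diagonal, smul_eq_mul]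
  by_cases h : y a b = 0
  · simp [h]
  · rw [← hy a b h, neg_one_zpow_sub]
    linear_combination (y a b * (-1 : K) ^ μ b) * neg_one_zpow_mul_self (K := K) (μ a)

end Operations

theorem m1_m1 {μ : Fin n → ℤ} {ε₁ ε₂ : Fin n → Fin n → K}
    (h₁ : IsBorderAug μ ε₁) (h₂ : IsBorderAug μ ε₂) (x : Fin n → Fin n → K) :
    m1 μ ε₁ ε₂ (m1 μ ε₁ ε₂ x) = 0 := by
  apply of.injective
  set Δ := gradingSign (K := K) μ
  rw [of_m1 h₁.1 h₂.1, of_m1 h₁.1 h₂.1, of_zero]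
  calc _ = of ε₁ * of ε₁ * of x - (Δ * of ε₁ + of ε₁ * Δ) * of x * Δ * of ε₂
        + Δ * Δ * of x * Δ * (Δ * of ε₂ + of ε₂ * Δ) * of ε₂
        - Δ * Δ * of x * Δ * Δ * (of ε₂ * of ε₂) := by noncomm_ring
    _ = 0 := by
      rw [h₁.mul_self_eq_zero, h₂.mul_self_eq_zero,
        gradingSign_mul_add_mul_gradingSign h₁.2.1, gradingSign_mul_add_mul_gradingSign h₂.2.1]
      simp

theorem m2_assoc {μ : Fin n → ℤ} (z y x : Fin n → Fin n → K) :
    m2 μ z (m2 μ y x) = m2 μ (m2 μ z y) x := by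
  apply of.injective
  simp only [of_m2, map_neg, koszulTwist_koszulTwist, Matrix.mul_neg, Matrix.neg_mul,
    Matrix.mul_assoc]

theorem m1_m2 {μ : Fin n → ℤ} {ε₁ ε₂ ε₃ : Fin n → Fin n → K}
    (h₁ : IsStrictUpperDegreeOne μ ε₁) (h₂ : IsStrictUpperDegreeOne μ ε₂)
    (h₃ : IsStrictUpperDegreeOne μ ε₃) {k : ℤ} {y : Fin n → Fin n → K}
    (hy : ∀ a b, y a b ≠ 0 → μ a - μ b = k) (x : Fin n → Fin n → K) :
    m1 μ ε₁ ε₃ (m2 μ y x) = m2 μ (m1 μ ε₂ ε₃ y) x + (-1 : K) ^ k • m2 μ y (m1 μ ε₁ ε₂ x) := by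
  apply of.injective
  apply koszulTwist_injective μ
  rw [← of_add_of, ← smul_of, map_add, map_smul]
  simp only [of_m2, map_neg, koszulTwist_koszulTwist, koszulTwist_of_m1 h₁ h₂,
    koszulTwist_of_m1 h₁ h₃, koszulTwist_of_m1 h₂ h₃]
  set X := koszulTwist μ (of x)
  set Y := koszulTwist μ (of y)
  set Δ := gradingSign (K := K) μ
  have hY : ∀ A, (-1 : K) ^ k • (A * Δ * Y) = A * Y * Δ := fun A => by
    rw [Matrix.mul_assoc, ← Matrix.mul_smul, Matrix.mul_assoc,
      smul_gradingSign_mul_of_homogeneous (y := Y) fun a b hab =>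
        hy a b (right_ne_zero_of_mul hab)]
  rw [smul_neg, hY]
  noncomm_ring

theorem aug_category_is_dg_general (μ : Fin n → ℤ)
    (ε₁ ε₂ ε₃ : Fin n → Fin n → K)
    (h₁ : IsBorderAug μ ε₁) (h₂ : IsBorderAug μ ε₂)
    (h₃ : IsBorderAug μ ε₃) :
    -- (i)  m₁ ∘ m₁ = 0 on hom₊(ε₁,ε₂)
    (∀ x : Fin n → Fin n → K, (∀ a b : Fin n, ¬ a ≤ b → x a b = 0) →
      m1 μ ε₁ ε₂ (m1 μ ε₁ ε₂ x) = 0) ∧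
    -- (ii) graded Leibniz rule, for homogeneous β of degree k
    (∀ (k : ℤ) (y x : Fin n → Fin n → K),
      (∀ a b : Fin n, ¬ a ≤ b → y a b = 0) → (∀ a b : Fin n, ¬ a ≤ b → x a b = 0) →
      (∀ a b : Fin n, y a b ≠ 0 → μ a - μ b = k) →
      m1 μ ε₁ ε₃ (m2 μ y x) =
        m2 μ (m1 μ ε₂ ε₃ y) x + ((-1 : K) ^ k) • m2 μ y (m1 μ ε₁ ε₂ x)) ∧
    -- (iii) strict associativity
    (∀ z y x : Fin n → Fin n → K,
      (∀ a b : Fin n, ¬ a ≤ b → z a b = 0) → (∀ a b : Fin n, ¬ a ≤ b → y a b = 0) →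
      (∀ a b : Fin n, ¬ a ≤ b → x a b = 0) →
      m2 μ z (m2 μ y x) = m2 μ (m2 μ z y) x) :=
  ⟨fun x _ => m1_m1 h₁ h₂ x,
   fun _ _ x _ _ hy => m1_m2 h₁.isStrictUpperDegreeOne h₂.isStrictUpperDegreeOne
     h₃.isStrictUpperDegreeOne hy x,
   fun z y x _ _ _ => m2_assoc z y x⟩

/-- **The augmentation category of the border DGA `A_n(μ)` is a DG category**:
(i) `m₁ ∘ m₁ = 0`; (ii) the graded Leibniz rule
`m₁ (m₂ (β ⊗ α)) = m₂ (m₁ β ⊗ α) + (-1)^{|β|} m₂ (β ⊗ m₁ α)` for homogeneous `β`;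
(iii) strict associativity `m₂ (γ ⊗ m₂ (β ⊗ α)) = m₂ (m₂ (γ ⊗ β) ⊗ α)`. -/
theorem aug_category_is_dg (hn : 1 ≤ n) (μ : Fin n → ℤ)
    (ε₁ ε₂ ε₃ ε₄ : Fin n → Fin n → K)
    (h₁ : IsBorderAug μ ε₁) (h₂ : IsBorderAug μ ε₂)
    (h₃ : IsBorderAug μ ε₃) (h₄ : IsBorderAug μ ε₄) :
    -- (i)  m₁ ∘ m₁ = 0 on hom₊(ε₁,ε₂)
    (∀ x : Fin n → Fin n → K, (∀ a b : Fin n, ¬ a ≤ b → x a b = 0) →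
      m1 μ ε₁ ε₂ (m1 μ ε₁ ε₂ x) = 0) ∧
    -- (ii) graded Leibniz rule, for homogeneous β of degree k
    (∀ (k : ℤ) (y x : Fin n → Fin n → K),
      (∀ a b : Fin n, ¬ a ≤ b → y a b = 0) → (∀ a b : Fin n, ¬ a ≤ b → x a b = 0) →
      (∀ a b : Fin n, y a b ≠ 0 → μ a - μ b = k) →
      m1 μ ε₁ ε₃ (m2 μ y x) =
        m2 μ (m1 μ ε₂ ε₃ y) x + ((-1 : K) ^ k) • m2 μ y (m1 μ ε₁ ε₂ x)) ∧
    -- (iii) strict associativity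
    (∀ z y x : Fin n → Fin n → K,
      (∀ a b : Fin n, ¬ a ≤ b → z a b = 0) → (∀ a b : Fin n, ¬ a ≤ b → y a b = 0) →
      (∀ a b : Fin n, ¬ a ≤ b → x a b = 0) →
      m2 μ z (m2 μ y x) = m2 μ (m2 μ z y) x) :=
  aug_category_is_dg_general μ ε₁ ε₂ ε₃ h₁ h₂ h₃

end AugSheaf
end
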